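/- Consider a GNEP in which player ν solves min_{x^ν} θ_ν(x) s.t. g(x) ≤ 0 and h^ν(x^ν) ≤ 0, where all players share a constraint map g : ℝ^n → ℝ^m with convex continuously differentiable components and each h^ν : ℝ^{n_ν} → ℝ^{p_ν} has convex continuously differentiable components. Assume this GNEP has feasible points. If x̄ is a KKT point of the corresponding Feasibility GNEP, then g(x̄) ≤ 0, i.e. x̄ is feasible for the GNEP. -/

import Mathlib

open Filter Topology Finset Function RealInnerProductSpace

/-- The strategy space of a GNEP: one Euclidean block per player. -/
abbrev Strat {N : ℕ} (n : Fin N → ℕ) := (ν : Fin N) → EuclideanSpace ℝ (Fin (n ν))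

/-- Partial gradient of `f : Strat n → ℝ` with respect to player `ν`'s block at `x`. -/
noncomputable def pgrad {N : ℕ} {n : Fin N → ℕ} (ν : Fin N)
    (f : Strat n → ℝ) (x : Strat n) : EuclideanSpace ℝ (Fin (n ν)) :=
  gradient (fun z => f (Function.update x ν z)) (x ν)

/-- Positive linear dependence of a family on a finite index set. -/
def PosLinDep {ι E : Type*} [AddCommGroup E] [Module ℝ E]
    (s : Finset ι) (v : ι → E) : Prop :=
  ∃ a : ι → ℝ, (∀ i, 0 ≤ a i) ∧ (∃ i ∈ s, a i ≠ 0) ∧ ∑ i ∈ s, a i • v i = 0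

/-- Linear dependence of a family on a finite index set. -/
def LinDep {ι E : Type*} [AddCommGroup E] [Module ℝ E]
    (s : Finset ι) (v : ι → E) : Prop :=
  ∃ a : ι → ℝ, (∃ i ∈ s, a i ≠ 0) ∧ ∑ i ∈ s, a i • v i = 0

/-- CPLD with respect to player `ν`. -/
def CPLDnu {N : ℕ} {n : Fin N → ℕ} {ι : Type*} (ν : Fin N)
    (c : ι → Strat n → ℝ) (x : Strat n) : Prop :=
  ∀ I : Finset ι, (∀ i ∈ I, c i x = 0) →
    PosLinDep I (fun i => pgrad ν (c i) x) →
    ∃ U ∈ 𝓝 x, ∀ y ∈ U, LinDep I (fun i => pgrad ν (c i) y)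

/-- EMFCQ with respect to player `ν`. -/
def EMFCQnu {N : ℕ} {n : Fin N → ℕ} {ι : Type*} (ν : Fin N)
    (c : ι → Strat n → ℝ) (x : Strat n) : Prop :=
  ∃ d : EuclideanSpace ℝ (Fin (n ν)), ∀ i, 0 ≤ c i x → inner (𝕜 := ℝ) (pgrad ν (c i) x) d < 0

/-!
Let `θ = ‖g₊‖²`, a convex differentiable function vanishing exactly where `g ≤ 0`, and let `z` be
feasible. For each player, stationarity at `x̄`, convexity of `h^ν` and complementarity give
`⟪∇_ν θ(x̄), z^ν - x̄^ν⟫ ≥ 0`. Summing over the players, `Dθ(x̄) (z - x̄) ≥ 0`, so the support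
inequality of the convex `θ` at `x̄` yields `θ(x̄) ≤ θ(z) = 0`.
-/

lemma hasDerivAt_max_zero_sq (t : ℝ) : HasDerivAt (fun s : ℝ => max s 0 ^ 2) (2 * max t 0) t := by
  refine hasDerivAt_of_hasDerivAt_of_ne' (f := fun s : ℝ => max s 0 ^ 2) (g := fun s => 2 * max s 0)
    (x := 0) (fun y hy => ?_) (by fun_prop) (by fun_prop) t
  rcases hy.lt_or_gt with hy | hy
  · have hzero : (fun s : ℝ => max s 0 ^ 2) =ᶠ[𝓝 y] fun _ => 0 := by
      filter_upwards [eventually_lt_nhds hy] with s hs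
      simp [max_eq_right hs.le]
    simpa [max_eq_right hy.le] using (hasDerivAt_const y (0 : ℝ)).congr_of_eventuallyEq hzero
  · have hsq : (fun s : ℝ => max s 0 ^ 2) =ᶠ[𝓝 y] fun s => s ^ 2 := by
      filter_upwards [eventually_gt_nhds hy] with s hs
      simp [max_eq_left hs.le]
    simpa [max_eq_left hy.le, mul_comm] using (hasDerivAt_pow 2 y).congr_of_eventuallyEq hsq

theorem ConvexOn.add_le_of_hasFDerivAt {E : Type*} [NormedAddCommGroup E] [NormedSpace ℝ E]
    {s : Set E} {f : E → ℝ} {f' : E →L[ℝ] ℝ} {x y : E} (hf : ConvexOn ℝ s f) (hx : x ∈ s)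
    (hy : y ∈ s) (hf' : HasFDerivAt f f' x) : f x + f' (y - x) ≤ f y := by
  have hline : ConvexOn ℝ (AffineMap.lineMap (k := ℝ) x y ⁻¹' s)
      (f ∘ AffineMap.lineMap (k := ℝ) x y) := hf.comp_affineMap _
  have hderiv : HasDerivAt (f ∘ AffineMap.lineMap (k := ℝ) x y) (f' (y - x)) 0 := by
    refine HasFDerivAt.comp_hasDerivAt (0 : ℝ) ?_ AffineMap.hasDerivAt_lineMap
    simpa using hf'
  have hslope := hline.le_slope_of_hasDerivAt (x := 0) (y := 1) (by simpa using hx)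
    (by simpa using hy) one_pos hderiv
  simp only [slope_def_field, comp_apply, AffineMap.lineMap_apply_one,
    AffineMap.lineMap_apply_zero, sub_zero, div_one] at hslope
  linarith

section SqViolation

variable {E ι : Type*} [Fintype ι]

/-- `sqViolation g y = ‖g₊(y)‖²`, the objective of every player in the Feasibility GNEP. -/
def sqViolation (g : ι → E → ℝ) (y : E) : ℝ := ∑ i, max (g i y) 0 ^ 2

lemma sqViolation_eq_zero {g : ι → E → ℝ} {y : E} (hy : ∀ i, g i y ≤ 0) : sqViolation g y = 0 :=
  Finset.sum_eq_zero fun i _ => by simp [max_eq_right (hy i)]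

lemma nonpos_of_sqViolation_nonpos {g : ι → E → ℝ} {y : E} (hy : sqViolation g y ≤ 0) (i : ι) :
    g i y ≤ 0 := by
  have hterm : max (g i y) 0 ^ 2 ≤ 0 :=
    (Finset.single_le_sum (fun j _ => sq_nonneg (max (g j y) 0)) (Finset.mem_univ i)).trans hy
  have : max (g i y) 0 = 0 := pow_eq_zero_iff two_ne_zero |>.mp (le_antisymm hterm (sq_nonneg _))
  exact le_max_left _ _ |>.trans this.le

lemma convexOn_sqViolation [AddCommGroup E] [Module ℝ E] {s : Set E} {g : ι → E → ℝ}
    (hs : Convex ℝ s) (hg : ∀ i, ConvexOn ℝ s (g i)) : ConvexOn ℝ s (sqViolation g) := by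
  have hterm (i : ι) : ConvexOn ℝ s fun y => max (g i y) 0 ^ 2 :=
    ((hg i).sup (convexOn_const 0 hs)).pow (fun _ _ => le_max_right _ _) 2
  have hsum := Finset.sum_induction (s := Finset.univ) (fun i y => max (g i y) 0 ^ 2)
    (ConvexOn ℝ s) (fun _ _ => ConvexOn.add) (convexOn_const 0 hs) (fun i _ => hterm i)
  rwa [Finset.sum_fn] at hsum

lemma differentiableAt_sqViolation [NormedAddCommGroup E] [NormedSpace ℝ E] {g : ι → E → ℝ}
    {x : E} (hg : ∀ i, DifferentiableAt ℝ (g i) x) : DifferentiableAt ℝ (sqViolation g) x := by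
  unfold sqViolation
  exact DifferentiableAt.fun_sum fun i _ =>
    (hasDerivAt_max_zero_sq (g i x)).differentiableAt.comp x (hg i)

end SqViolation

section PartialGradient

variable {N : ℕ} {n : Fin N → ℕ} {f : Strat n → ℝ} {f' : Strat n →L[ℝ] ℝ} {x : Strat n}

lemma HasFDerivAt.inner_pgrad (hf : HasFDerivAt f f' x) (ν : Fin N)
    (u : EuclideanSpace ℝ (Fin (n ν))) : ⟪pgrad ν f x, u⟫ = f' (Pi.single ν u) := by
  have hblock : HasFDerivAt (fun z => f (update x ν z))
      (f'.comp (.pi (Pi.single ν (.id ℝ _)))) (x ν) :=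
    (update_eq_self ν x ▸ hf).comp (x ν) (hasFDerivAt_update x (x ν))
  rw [pgrad, hblock.hasGradientAt.gradient, InnerProductSpace.toDual_symm_apply,
    ContinuousLinearMap.comp_apply]
  congr 1
  funext μ
  rcases eq_or_ne μ ν with rfl | hμν
  · simp
  · simp [Pi.single_eq_of_ne hμν]

lemma HasFDerivAt.apply_eq_sum_inner_pgrad (hf : HasFDerivAt f f' x) (v : Strat n) :
    f' v = ∑ ν, ⟪pgrad ν f x, v ν⟫ := by
  conv_lhs => rw [← Finset.univ_sum_single v, map_sum]
  simp only [hf.inner_pgrad]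

end PartialGradient

theorem inner_nonneg_of_kkt {F ι : Type*} [NormedAddCommGroup F] [InnerProductSpace ℝ F]
    [CompleteSpace F] [Fintype ι] {s : Set F} {c : ι → F → ℝ} {u z q : F} {w : ι → ℝ}
    (hconv : ∀ j, ConvexOn ℝ s (c j)) (hdiff : ∀ j, DifferentiableAt ℝ (c j) u)
    (hu : u ∈ s) (hz : z ∈ s) (hzc : ∀ j, c j z ≤ 0)
    (hstat : q + ∑ j, w j • gradient (c j) u = 0) (hcompl : ∀ j, min (-c j u) (w j) = 0) :
    0 ≤ ⟪q, z - u⟫ := by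
  have hw (j : ι) : 0 ≤ w j := hcompl j ▸ min_le_right _ _
  have hslack (j : ι) : w j * c j u = 0 := by
    rcases min_choice (-c j u) (w j) with h | h <;> rw [hcompl j] at h
    · simp [neg_eq_zero.mp h.symm]
    · simp [← h]
  have hterm (j : ι) : w j * ⟪gradient (c j) u, z - u⟫ ≤ 0 := by
    have hsupport := (hconv j).add_le_of_hasFDerivAt hu hz (hdiff j).hasFDerivAt
    rw [← InnerProductSpace.toDual_symm_apply, ← gradient] at hsupport
    calc w j * ⟪gradient (c j) u, z - u⟫ ≤ w j * (c j z - c j u) := by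
          gcongr
          · exact hw j
          · linarith
      _ = w j * c j z := by rw [mul_sub, hslack, sub_zero]
      _ ≤ 0 := mul_nonpos_of_nonneg_of_nonpos (hw j) (hzc j)
  rw [eq_neg_of_add_eq_zero_left hstat, inner_neg_left, sum_inner, neg_nonneg]
  exact Finset.sum_nonpos fun j _ => (real_inner_smul_left _ _ _).trans_le (hterm j)

/-- **Theorem 4.4.** For a jointly-convex GNEP with shared convex penalized
constraints `g` and individual convex constraints `h ν` in the own variables only, every KKT
point of the Feasibility GNEP is feasible, provided feasible points exist. -/
theorem stmt12 {N : ℕ} {n : Fin N → ℕ} {m : ℕ} {p : Fin N → ℕ}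
    (g : Fin m → Strat n → ℝ)
    (h : (ν : Fin N) → Fin (p ν) → EuclideanSpace ℝ (Fin (n ν)) → ℝ)
    (hgC1 : ∀ i, ContDiff ℝ 1 (g i))
    (hgconv : ∀ i, ConvexOn ℝ Set.univ (g i))
    (hhC1 : ∀ ν j, ContDiff ℝ 1 (h ν j))
    (hhconv : ∀ ν j, ConvexOn ℝ Set.univ (h ν j))
    (hfeasible : ∃ z : Strat n, (∀ i, g i z ≤ 0) ∧ ∀ ν j, h ν j (z ν) ≤ 0)
    (xbar : Strat n)
    (hKKT : ∀ ν, ∃ w : Fin (p ν) → ℝ,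
      (pgrad ν (fun y => ∑ i, max (g i y) 0 ^ 2) xbar
        + ∑ j, w j • gradient (h ν j) (xbar ν) = 0) ∧
      (∀ j, min (-(h ν j (xbar ν))) (w j) = 0)) :
    ∀ i, g i xbar ≤ 0 := by
  obtain ⟨z, hzg, hzh⟩ := hfeasible
  have hθ : HasFDerivAt (sqViolation g) (fderiv ℝ (sqViolation g) xbar) xbar :=
    (differentiableAt_sqViolation fun i => (hgC1 i).differentiable one_ne_zero xbar).hasFDerivAt
  have hplayer (ν : Fin N) : 0 ≤ ⟪pgrad ν (sqViolation g) xbar, z ν - xbar ν⟫ := by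
    obtain ⟨w, hstat, hcompl⟩ := hKKT ν
    exact inner_nonneg_of_kkt (hhconv ν) (fun j => (hhC1 ν j).differentiable one_ne_zero _)
      (Set.mem_univ _) (Set.mem_univ _) (hzh ν) hstat hcompl
  have hdescent : 0 ≤ fderiv ℝ (sqViolation g) xbar (z - xbar) := by
    rw [hθ.apply_eq_sum_inner_pgrad]
    exact Finset.sum_nonneg fun ν _ => hplayer ν
  have hsupport := (convexOn_sqViolation convex_univ hgconv).add_le_of_hasFDerivAt
    (Set.mem_univ xbar) (Set.mem_univ z) hθ
  exact nonpos_of_sqViolation_nonpos (by linarith [sqViolation_eq_zero hzg])
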